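/- arXiv:2012.09625 — 4 statements merged into one kernel-verified Lean document; each statement's English description precedes it below -/
import Mathlib

section
/- In the real Clifford algebra Cl(1,n+1), let x = ∑_{j=1}^n x_j e_j be a nonzero vector in the span of e₁,…,e_n, let |x| = (∑_j x_j²)^{1/2}, and set x' = e₁ x e₁. Then the following identity holds in Cl(1,n+1): e_{n+1}·e₁·(1 + (1/2)·x·(e₀+e_{n+1})) = (1 + (1/(2|x|²))·x'·(e₀+e_{n+1})) · ((−1/|x|)·e₁·x) · ((1/2)(|x|+|x|⁻¹) + (1/2)(|x|−|x|⁻¹)·e₀e_{n+1}) · (1 + (1/(2|x|²))·x·(e₀−e_{n+1})). (This is the Gelfand–Naimark decomposition w⁻¹ n̄_x = n̄_{x'/|x|²} · (−e₁x/|x|) · a_{ln|x|} · n_{x/|x|²} of the conformal spin group Spin₀(1,n+1).) -/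
/-!
Only a few relations enter: `e₀`, `e_{n+1}`, `e₁` square to `1`, `-1`, `-1`, the vector `x`
squares to `-|x|²`, and `e₀`, `e_{n+1}` anticommute with each other, with `e₁` and with `x`
(which lie in their orthogonal complement). No relation between `e₁` and `x` is needed, which
matters since `x` may have an `e₁`-component. Modulo these relations both sides expand to the same
linear combination of words in `e₀`, `e_{n+1}`, `e₁`, `x`.
-/

open CliffordAlgebra

theorem gelfand_naimark_decomposition_of_anticomm {K A : Type*} [Field K] [Ring A] [Algebra K A]
    {a b u X : A} {r : K} (h2 : (2 : K) ≠ 0) (hr : r ≠ 0)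
    (haa : a * a = 1) (hbb : b * b = -1) (huu : u * u = -1)
    (hXX : X * X = algebraMap K A (-r ^ 2))
    (hab : a * b = -(b * a)) (hau : a * u = -(u * a)) (hbu : b * u = -(u * b))
    (haX : a * X = -(X * a)) (hbX : b * X = -(X * b)) :
    b * u * (1 + (1 / 2 : K) • (X * (a + b))) =
      (1 + (1 / (2 * r ^ 2)) • (u * X * u * (a + b))) * ((-(1 / r)) • (u * X)) *
        (((1 / 2) * (r + r⁻¹)) • (1 : A) + ((1 / 2) * (r - r⁻¹)) • (a * b)) *
        (1 + (1 / (2 * r ^ 2)) • (X * (a - b))) := by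
  have mul_mul_of_mul_eq {p q s : A} (h : p * q = s) (t : A) : p * (q * t) = s * t := by
    rw [← mul_assoc, h]
  simp only [mul_add, add_mul, mul_sub, sub_mul, smul_mul_assoc, mul_smul_comm, smul_smul,
    mul_assoc, mul_one, one_mul, smul_add, smul_sub, mul_neg, neg_mul, smul_neg, neg_neg,
    haa, hbb, hab, hbu, haX, hbX, mul_mul_of_mul_eq hbb, mul_mul_of_mul_eq huu,
    mul_mul_of_mul_eq hXX, mul_mul_of_mul_eq hab, mul_mul_of_mul_eq hau, mul_mul_of_mul_eq hbu,
    mul_mul_of_mul_eq haX, mul_mul_of_mul_eq hbX, Algebra.algebraMap_eq_smul_one]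
  match_scalars <;> field_simp <;> ring

theorem CliffordAlgebra.ι_mul_ι_self_of_apply_eq {R M : Type*} [CommRing R] [AddCommGroup M]
    [Module R M] {Q : QuadraticForm R M} {v : M} {r : R} (h : Q v = r) :
    ι Q v * ι Q v = algebraMap R _ r :=
  h ▸ ι_sq_scalar Q v

section Lorentzian

variable {m : ℕ} {Q : QuadraticForm ℝ (EuclideanSpace ℝ (Fin (m + 2)))}
  (hQ : ∀ v : EuclideanSpace ℝ (Fin (m + 2)),
    Q v = (v 0) ^ 2 - ∑ j : Fin (m + 1), (v j.succ) ^ 2)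
include hQ

theorem isOrtho_of_mul_eq_zero {v w : EuclideanSpace ℝ (Fin (m + 2))}
    (hvw : ∀ k, v k * w k = 0) : Q.IsOrtho v w := by
  have hsq (k) : (v k + w k) ^ 2 = v k ^ 2 + w k ^ 2 := by linear_combination 2 * hvw k
  simp only [QuadraticMap.isOrtho_def, hQ, PiLp.add_apply, hsq, Finset.sum_add_distrib]
  ring

theorem isOrtho_single_left {i : Fin (m + 2)} {w : EuclideanSpace ℝ (Fin (m + 2))}
    (hw : w i = 0) : Q.IsOrtho (EuclideanSpace.single i 1) w :=
  isOrtho_of_mul_eq_zero hQ fun k => by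
    by_cases hk : k = i
    · simp [hk, hw]
    · simp [hk]

theorem apply_single_zero : Q (EuclideanSpace.single 0 1) = 1 := by
  simp [hQ, Fin.succ_ne_zero]

theorem apply_single_of_ne_zero {i : Fin (m + 2)} (hi : i ≠ 0) :
    Q (EuclideanSpace.single i 1) = -1 := by
  obtain ⟨j, rfl⟩ := Fin.exists_succ_eq.2 hi
  simp [hQ, (Fin.succ_ne_zero j).symm]

theorem apply_sum_smul_single (c : Fin m → ℝ) :
    Q (∑ j : Fin m, c j • EuclideanSpace.single j.succ.castSucc 1) = -∑ j, c j ^ 2 := by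
  rw [hQ, Fin.sum_univ_castSucc]
  simp [Pi.single_apply, (Fin.succ_ne_zero _).symm, Fin.castSucc_ne_last]

end Lorentzian

/-- Gelfand–Naimark decomposition `w⁻¹ n̄_x = n̄_{x'/|x|²} · (−e₁x/|x|) · a_{ln|x|} · n_{x/|x|²}`
in the Clifford algebra Cl(1,n+1). -/
theorem gelfand_naimark_decomposition (n : ℕ)
    (Q : QuadraticForm ℝ (EuclideanSpace ℝ (Fin (n + 2))))
    (hQ : ∀ v : EuclideanSpace ℝ (Fin (n + 2)),
      Q v = (v 0) ^ 2 - ∑ j : Fin (n + 1), (v j.succ) ^ 2)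
    (c : Fin n → ℝ)
    (x : EuclideanSpace ℝ (Fin (n + 2)))
    (hx : x = ∑ j : Fin n, c j • EuclideanSpace.single (j.succ.castSucc) (1 : ℝ))
    (hx0 : x ≠ 0)
    (nx : ℝ) (hnx : nx = Real.sqrt (∑ j : Fin n, (c j) ^ 2)) :
    CliffordAlgebra.ι Q (EuclideanSpace.single (Fin.last (n + 1)) (1 : ℝ)) *
        CliffordAlgebra.ι Q (EuclideanSpace.single (1 : Fin (n + 2)) (1 : ℝ)) *
        (1 + (1 / 2 : ℝ) •
          (CliffordAlgebra.ι Q x *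
            (CliffordAlgebra.ι Q (EuclideanSpace.single (0 : Fin (n + 2)) (1 : ℝ)) +
             CliffordAlgebra.ι Q (EuclideanSpace.single (Fin.last (n + 1)) (1 : ℝ))))) =
      (1 + (1 / (2 * nx ^ 2)) •
          ((CliffordAlgebra.ι Q (EuclideanSpace.single (1 : Fin (n + 2)) (1 : ℝ)) *
              CliffordAlgebra.ι Q x *
              CliffordAlgebra.ι Q (EuclideanSpace.single (1 : Fin (n + 2)) (1 : ℝ))) *
            (CliffordAlgebra.ι Q (EuclideanSpace.single (0 : Fin (n + 2)) (1 : ℝ)) +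
             CliffordAlgebra.ι Q (EuclideanSpace.single (Fin.last (n + 1)) (1 : ℝ))))) *
        ((-(1 / nx)) •
          (CliffordAlgebra.ι Q (EuclideanSpace.single (1 : Fin (n + 2)) (1 : ℝ)) *
            CliffordAlgebra.ι Q x)) *
        (((1 / 2) * (nx + nx⁻¹)) • (1 : CliffordAlgebra Q) +
          ((1 / 2) * (nx - nx⁻¹)) •
            (CliffordAlgebra.ι Q (EuclideanSpace.single (0 : Fin (n + 2)) (1 : ℝ)) *
             CliffordAlgebra.ι Q (EuclideanSpace.single (Fin.last (n + 1)) (1 : ℝ)))) *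
        (1 + (1 / (2 * nx ^ 2)) •
          (CliffordAlgebra.ι Q x *
            (CliffordAlgebra.ι Q (EuclideanSpace.single (0 : Fin (n + 2)) (1 : ℝ)) -
             CliffordAlgebra.ι Q (EuclideanSpace.single (Fin.last (n + 1)) (1 : ℝ))))) := by
  obtain ⟨k, hk⟩ : ∃ k, c k ≠ 0 := by
    contrapose! hx0
    simp [hx, hx0]
  have hnx_sq : nx ^ 2 = ∑ j, c j ^ 2 := hnx ▸ Real.sq_sqrt (by positivity)
  have hnx0 : nx ≠ 0 := by
    rw [hnx, Real.sqrt_ne_zero']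
    exact Finset.sum_pos' (fun j _ => sq_nonneg (c j)) ⟨k, Finset.mem_univ k, by positivity⟩
  have hone_ne_last : (1 : Fin (n + 2)) ≠ Fin.last (n + 1) := by
    rw [Ne, Fin.ext_iff, Fin.val_one, Fin.val_last]
    have := k.pos
    omega
  have anticomm {i : Fin (n + 2)} {w : EuclideanSpace ℝ (Fin (n + 2))} (hw : w i = 0) :=
    ι_mul_ι_comm_of_isOrtho (isOrtho_single_left hQ hw)
  subst hx
  exact gelfand_naimark_decomposition_of_anticomm two_ne_zero hnx0
    (by rw [ι_mul_ι_self_of_apply_eq (apply_single_zero hQ), map_one])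
    (by rw [ι_mul_ι_self_of_apply_eq (apply_single_of_ne_zero hQ Fin.last_pos.ne'), map_neg,
      map_one])
    (by rw [ι_mul_ι_self_of_apply_eq (apply_single_of_ne_zero hQ one_ne_zero), map_neg, map_one])
    (by rw [ι_mul_ι_self_of_apply_eq (apply_sum_smul_single hQ c), hnx_sq])
    (anticomm (by simp)) (anticomm (by simp)) (anticomm (by simp [hone_ne_last.symm]))
    (anticomm (by simp [(Fin.succ_ne_zero _).symm]))
    (anticomm (by simp [Fin.castSucc_ne_last]))
end

section
/- Let (S,ρ) be a Clifford module for Cl(ℝⁿ) and (S',ρ') its dual module with pairing (s,t') = t'(s). Let g = ι(v₁)ι(v₂)⋯ι(v_{2k}) ∈ Cl(ℝⁿ) be a product of an even number of unit vectors v_j ∈ ℝⁿ (i.e., g ∈ Spin(n)), and let x₁,…,x_k ∈ ℝⁿ and y₁,…,y_k ∈ ℝⁿ be such that ι(y_i) = g⁻¹ ι(x_i) g for each i. Then for all s ∈ S and t' ∈ S': (ρ(x₁)ρ(x₂)⋯ρ(x_k)ρ(g) s, ρ'(g) t') = (ρ(y₁)ρ(y₂)⋯ρ(y_k) s, t'). (This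 expresses that the map Ψ(s⊗t')(ω) = (ρ(γ(ω))s, t') intertwines ρ⊗ρ' with the natural representation of Spin(n) on alternating forms.) -/
/-! Each `ι vⱼ` squares to `-1`, so `g` is unitary for Clifford conjugation `a ↦ a⋆`, and since
`g` is even, `g⋆ = ι v_{2k} ⋯ ι v₁`. The relation `ρ'(ι x) = -ρ(ι x)ᵀ` on generators forces
`ρ' a = ρ(a⋆)ᵀ` for every `a`, so the left side is `t'(ρ(g⋆ · ι x₁ ⋯ ι x_k · g) s)`; conjugation
by the unitary `g` is multiplicative, which turns `g⋆ · ι x₁ ⋯ ι x_k · g` into `ι y₁ ⋯ ι y_k`. -/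

namespace CliffordAlgebra

variable {R M : Type*} [CommRing R] [AddCommGroup M] [Module R M] {Q : QuadraticForm R M}

theorem ι_mem_unitary {m : M} (hm : Q m = -1) :
    ι Q m ∈ unitary (CliffordAlgebra Q) := by
  have h : -(ι Q m * ι Q m) = 1 := by rw [ι_sq_scalar, hm, map_neg, map_one, neg_neg]
  exact ⟨by rwa [star_ι, neg_mul], by rwa [star_ι, mul_neg]⟩

theorem prod_map_ι_mem_unitary {l : List M} (hl : ∀ m ∈ l, Q m = -1) :
    (l.map (ι Q)).prod ∈ unitary (CliffordAlgebra Q) :=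
  Submonoid.list_prod_mem _ <| by
    simpa only [List.forall_mem_map] using fun m hm => ι_mem_unitary (hl m hm)

theorem star_prod_map_ι_of_even {l : List M} (hl : Even l.length) :
    star (l.map (ι Q)).prod = (l.map (ι Q)).reverse.prod := by
  rw [star_def, involute_prod_map_ι, hl.neg_one_pow, one_smul, reverse_prod_map_ι]

variable {𝕜 S : Type*} [CommRing 𝕜] [Algebra R 𝕜] [AddCommGroup S] [Module 𝕜 S] [Module R S]
  [IsScalarTower R 𝕜 S]

theorem apply_eq_dualMap_star
    (ρ : CliffordAlgebra Q →ₐ[R] Module.End 𝕜 S)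
    (ρ' : CliffordAlgebra Q →ₐ[R] Module.End 𝕜 (Module.Dual 𝕜 S))
    (hρ' : ∀ m (t : Module.Dual 𝕜 S) s, ρ' (ι Q m) t s = -t (ρ (ι Q m) s))
    (a : CliffordAlgebra Q) : ρ' a = (ρ (star a)).dualMap := by
  induction a using CliffordAlgebra.induction with
  | algebraMap r => ext t s; simp
  | ι m => ext t s; simp [hρ', star_ι]
  | mul a b ha hb => rw [map_mul, ha, hb, star_mul, map_mul]; rfl
  | add a b ha hb => ext t s; simp [ha, hb, star_add]

end CliffordAlgebra

open CliffordAlgebra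

theorem psi_intertwines_general (n k : ℕ)
    (Q : QuadraticForm ℝ (EuclideanSpace ℝ (Fin n)))
    (hQ : ∀ x : EuclideanSpace ℝ (Fin n), Q x = -‖x‖ ^ 2)
    (S : Type) [AddCommGroup S] [Module ℂ S]
    (ρ : CliffordAlgebra Q →ₐ[ℝ] Module.End ℂ S)
    (ρ' : CliffordAlgebra Q →ₐ[ℝ] Module.End ℂ (Module.Dual ℂ S))
    (hρ' : ∀ (x : EuclideanSpace ℝ (Fin n)) (t' : Module.Dual ℂ S) (s : S),
      (ρ' (CliffordAlgebra.ι Q x) t') s = -(t' (ρ (CliffordAlgebra.ι Q x) s)))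
    (v : Fin (2 * k) → EuclideanSpace ℝ (Fin n)) (hv : ∀ i, ‖v i‖ = 1)
    (x y : Fin k → EuclideanSpace ℝ (Fin n))
    (hy : ∀ i, CliffordAlgebra.ι Q (y i) =
      (List.ofFn fun a => CliffordAlgebra.ι Q (v a)).reverse.prod *
        CliffordAlgebra.ι Q (x i) *
        (List.ofFn fun a => CliffordAlgebra.ι Q (v a)).prod)
    (s : S) (t' : Module.Dual ℂ S) :
    (ρ' ((List.ofFn fun a => CliffordAlgebra.ι Q (v a)).prod) t')
        (((List.ofFn fun i => ρ (CliffordAlgebra.ι Q (x i))).prod)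
          (ρ ((List.ofFn fun a => CliffordAlgebra.ι Q (v a)).prod) s)) =
      t' (((List.ofFn fun i => ρ (CliffordAlgebra.ι Q (y i))).prod) s) := by
  have hofFn : ∀ {m} (f : Fin m → EuclideanSpace ℝ (Fin n)),
      List.ofFn (fun a => ι Q (f a)) = (List.ofFn f).map (ι Q) := fun f => List.map_ofFn.symm
  have hρofFn : ∀ (f : Fin k → EuclideanSpace ℝ (Fin n)),
      (List.ofFn fun a => ρ (ι Q (f a))).prod = ρ ((List.ofFn f).map (ι Q)).prod := fun f => by
    rw [map_list_prod, List.map_map, List.map_ofFn]; rfl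
  simp only [hofFn, hρofFn] at hy ⊢
  set g : unitary (CliffordAlgebra Q) := ⟨_, prod_map_ι_mem_unitary (l := List.ofFn v) <| by
    simp [List.mem_ofFn, hQ, hv]⟩
  have hstar : star (g : CliffordAlgebra Q) = ((List.ofFn v).map (ι Q)).reverse.prod :=
    star_prod_map_ι_of_even (by simp)
  have hy_prod : ((List.ofFn y).map (ι Q)).prod =
      Unitary.conjStarAlgAut ℝ _ (star g) ((List.ofFn x).map (ι Q)).prod := by
    rw [map_list_prod, List.map_map, List.map_ofFn, List.map_ofFn]
    congr 2
    funext i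
    simp only [Function.comp_apply, hy i, Unitary.conjStarAlgAut_star_apply, hstar]
    rfl
  rw [apply_eq_dualMap_star ρ ρ' hρ', LinearMap.dualMap_apply, hy_prod,
    Unitary.conjStarAlgAut_star_apply, map_mul, map_mul]
  rfl

/-- The map Ψ intertwines ρ⊗ρ' with the natural representation of Spin(n):
(ρ(x₁)⋯ρ(x_k)ρ(g)s, ρ'(g)t') = (ρ(y₁)⋯ρ(y_k)s, t') when ι(yᵢ) = g⁻¹ι(xᵢ)g. -/
theorem psi_intertwines (n k : ℕ)
    (Q : QuadraticForm ℝ (EuclideanSpace ℝ (Fin n)))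
    (hQ : ∀ x : EuclideanSpace ℝ (Fin n), Q x = -‖x‖ ^ 2)
    (S : Type) [AddCommGroup S] [Module ℂ S] [FiniteDimensional ℂ S] [Nontrivial S]
    (ρ : CliffordAlgebra Q →ₐ[ℝ] Module.End ℂ S)
    (ρ' : CliffordAlgebra Q →ₐ[ℝ] Module.End ℂ (Module.Dual ℂ S))
    (hρ' : ∀ (x : EuclideanSpace ℝ (Fin n)) (t' : Module.Dual ℂ S) (s : S),
      (ρ' (CliffordAlgebra.ι Q x) t') s = -(t' (ρ (CliffordAlgebra.ι Q x) s)))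
    (v : Fin (2 * k) → EuclideanSpace ℝ (Fin n)) (hv : ∀ i, ‖v i‖ = 1)
    (x y : Fin k → EuclideanSpace ℝ (Fin n))
    (hy : ∀ i, CliffordAlgebra.ι Q (y i) =
      (List.ofFn fun a => CliffordAlgebra.ι Q (v a)).reverse.prod *
        CliffordAlgebra.ι Q (x i) *
        (List.ofFn fun a => CliffordAlgebra.ι Q (v a)).prod)
    (s : S) (t' : Module.Dual ℂ S) :
    (ρ' ((List.ofFn fun a => CliffordAlgebra.ι Q (v a)).prod) t')
        (((List.ofFn fun i => ρ (CliffordAlgebra.ι Q (x i))).prod)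
          (ρ ((List.ofFn fun a => CliffordAlgebra.ι Q (v a)).prod) s)) =
      t' (((List.ofFn fun i => ρ (CliffordAlgebra.ι Q (y i))).prod) s) :=
  psi_intertwines_general n k Q hQ S ρ ρ' hρ' v hv x y hy s t'
end

section
/- Let (S,ρ) be a Clifford module for Cl(ℝⁿ) and (S',ρ') its dual module with pairing (s,t') = t'(s). Let 1 ≤ j₁ < ⋯ < j_k ≤ n and e_J = ι(e_{j₁})⋯ι(e_{j_k}) ∈ Cl(ℝⁿ). Then for all v ∈ S and w' ∈ S': ∑_{i=1}^n (ρ(e_J)ρ(e_i)v, ρ'(e_i)w') = (−1)^k (n−2k)·(ρ(e_J)v, w'). (This is the identity Ψ^{(k)} ∘ L = (−1)^k(n−2k) Ψ^{(k)}, where L(v⊗w') = ∑_i ρ(e_i)v ⊗ ρ'(e_i)w'.) -/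
/-!
For a basis vector `eᵢ` and `e_J = e_{j₁} ⋯ e_{j_k}`, moving `eᵢ` across `e_J` costs a sign for
every `j_a ≠ i`, so `eᵢ e_J eᵢ = (-1)^(k + [i ∈ J]) eᵢ² e_J = -(-1)^k (-1)^[i ∈ J] e_J`.
By the defining property of `ρ'`, the `i`-th summand is `-(eᵢ e_J eᵢ v, w')`, i.e.
`(-1)^k (1 - 2 [i ∈ J]) (e_J v, w')`; summing over `i` gives `(-1)^k (n - 2k)`.
-/

open CliffordAlgebra

/-- The sign is `(-1)^(#{a | l[a] ≠ i})`, written with exponent `length + count` rather than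
`length - count`. -/
theorem List.prod_map_mul_of_anticomm {A ι : Type*} [Ring A] [DecidableEq ι] (f : ι → A) (i : ι)
    (h : ∀ j ≠ i, f j * f i = -(f i * f j)) (l : List ι) :
    (l.map f).prod * f i = (-1 : ℤ) ^ (l.length + l.count i) • (f i * (l.map f).prod) := by
  induction l with
  | nil => simp
  | cons j t ih =>
    rw [map_cons, prod_cons, mul_assoc, ih, mul_smul_comm, ← mul_assoc, length_cons, count_cons]
    by_cases hji : j = i
    · subst hji
      simp only [beq_self_eq_true, if_true, mul_assoc]
      rw [show t.length + 1 + (t.count j + 1) = t.length + t.count j + 2 by omega,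
        pow_add (-1 : ℤ) _ 2, neg_one_sq, mul_one]
    · simp only [h j hji, beq_iff_eq, hji, if_false, add_zero, neg_mul, mul_assoc, smul_neg,
        ← neg_smul, add_right_comm _ 1, pow_succ, mul_neg_one]

theorem neg_one_pow_eq_one_sub_two_mul {R : Type*} [Ring R] {c : ℕ} (hc : c ≤ 1) :
    (-1 : R) ^ c = 1 - 2 * c := by
  interval_cases c <;> norm_num

theorem List.Nodup.sum_neg_one_pow_count {R ι : Type*} [CommRing R] [Fintype ι] [DecidableEq ι]
    {l : List ι} (hl : l.Nodup) :
    ∑ i, (-1 : R) ^ l.count i = Fintype.card ι - 2 * l.length := by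
  have hcount : ∑ i, l.count i = l.length := by
    simpa using Multiset.sum_count_eq_card (s := Finset.univ) (m := (l : Multiset ι)) (by simp)
  simp_rw [neg_one_pow_eq_one_sub_two_mul (List.nodup_iff_count_le_one.mp hl _),
    Finset.sum_sub_distrib, ← Finset.mul_sum]
  simp [← Nat.cast_sum, hcount]

theorem CliffordAlgebra.ι_mul_prod_map_ι_mul_ι {R M κ : Type*} [CommRing R] [AddCommGroup M]
    [Module R M] {Q : QuadraticForm R M} [DecidableEq κ] (e : κ → M) (i : κ)
    (h : ∀ j ≠ i, Q.IsOrtho (e j) (e i)) (l : List κ) :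
    ι Q (e i) * (l.map fun j => ι Q (e j)).prod * ι Q (e i) =
      (-1 : ℤ) ^ (l.length + l.count i) • Q (e i) • (l.map fun j => ι Q (e j)).prod := by
  rw [mul_assoc, List.prod_map_mul_of_anticomm _ i (fun j hj => ι_mul_ι_comm_of_isOrtho (h j hj)),
    mul_smul_comm, ← mul_assoc, ι_sq_scalar, Algebra.algebraMap_eq_smul_one, smul_mul_assoc,
    one_mul]

theorem QuadraticMap.isOrtho_of_inner_eq_zero {E : Type*} [NormedAddCommGroup E]
    [InnerProductSpace ℝ E] {Q : QuadraticForm ℝ E} (hQ : ∀ x, Q x = -‖x‖ ^ 2) {x y : E}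
    (hxy : inner ℝ x y = 0) : Q.IsOrtho x y := by
  rw [isOrtho_def, hQ, hQ, hQ, norm_add_sq_real, hxy]
  ring

theorem psi_k_L_general (n k : ℕ)
    (Q : QuadraticForm ℝ (EuclideanSpace ℝ (Fin n)))
    (hQ : ∀ x : EuclideanSpace ℝ (Fin n), Q x = -‖x‖ ^ 2)
    (S : Type) [AddCommGroup S] [Module ℂ S]
    (ρ : CliffordAlgebra Q →ₐ[ℝ] Module.End ℂ S)
    (ρ' : CliffordAlgebra Q →ₐ[ℝ] Module.End ℂ (Module.Dual ℂ S))
    (hρ' : ∀ (x : EuclideanSpace ℝ (Fin n)) (t' : Module.Dual ℂ S) (s : S),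
      (ρ' (CliffordAlgebra.ι Q x) t') s = -(t' (ρ (CliffordAlgebra.ι Q x) s)))
    (J : Fin k → Fin n) (hJ : StrictMono J)
    (v : S) (w' : Module.Dual ℂ S) :
    ∑ i : Fin n,
        (ρ' (CliffordAlgebra.ι Q (EuclideanSpace.single i (1 : ℝ))) w')
          ((ρ ((List.ofFn fun a =>
              CliffordAlgebra.ι Q (EuclideanSpace.single (J a) (1 : ℝ))).prod))
            ((ρ (CliffordAlgebra.ι Q (EuclideanSpace.single i (1 : ℝ)))) v)) =
      ((-1 : ℂ) ^ k * ((n : ℂ) - 2 * k)) *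
        w' ((ρ ((List.ofFn fun a =>
            CliffordAlgebra.ι Q (EuclideanSpace.single (J a) (1 : ℝ))).prod)) v) := by
  set e : Fin n → EuclideanSpace ℝ (Fin n) := fun i => EuclideanSpace.single i 1
  have he : Orthonormal ℝ e := EuclideanSpace.orthonormal_single
  set l := List.ofFn J
  set P := (l.map fun j => ι Q (e j)).prod
  have hP : (List.ofFn fun a => ι Q (e (J a))).prod = P := by simp only [P, l, List.map_ofFn]; rfl
  have hterm : ∀ i, (ρ' (ι Q (e i)) w') (ρ P (ρ (ι Q (e i)) v)) =
      (-1) ^ k * (-1) ^ l.count i * w' (ρ P v) := by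
    intro i
    have hortho : ∀ j ≠ i, Q.IsOrtho (e j) (e i) := fun j hj =>
      QuadraticMap.isOrtho_of_inner_eq_zero hQ (he.2 hj)
    rw [hρ', ← Module.End.mul_apply, ← Module.End.mul_apply, ← map_mul, ← map_mul,
      ι_mul_prod_map_ι_mul_ι e i hortho l, hQ, he.1 i]
    rw [map_zsmul, map_smul, LinearMap.smul_apply, LinearMap.smul_apply, map_zsmul,
      LinearMap.map_smul_of_tower, zsmul_eq_mul, Complex.real_smul]
    push_cast
    rw [List.length_ofFn]
    ring
  rw [hP, Finset.sum_congr rfl fun i _ => hterm i, ← Finset.sum_mul, ← Finset.mul_sum,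
    (List.nodup_ofFn.mpr hJ.injective).sum_neg_one_pow_count]
  simp

/-- The identity Ψ^{(k)} ∘ L = (−1)^k(n−2k) Ψ^{(k)}:
∑_i (ρ(e_J)ρ(e_i)v, ρ'(e_i)w') = (−1)^k(n−2k)·(ρ(e_J)v, w'). -/
theorem psi_k_L (n k : ℕ)
    (Q : QuadraticForm ℝ (EuclideanSpace ℝ (Fin n)))
    (hQ : ∀ x : EuclideanSpace ℝ (Fin n), Q x = -‖x‖ ^ 2)
    (S : Type) [AddCommGroup S] [Module ℂ S] [FiniteDimensional ℂ S] [Nontrivial S]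
    (ρ : CliffordAlgebra Q →ₐ[ℝ] Module.End ℂ S)
    (ρ' : CliffordAlgebra Q →ₐ[ℝ] Module.End ℂ (Module.Dual ℂ S))
    (hρ' : ∀ (x : EuclideanSpace ℝ (Fin n)) (t' : Module.Dual ℂ S) (s : S),
      (ρ' (CliffordAlgebra.ι Q x) t') s = -(t' (ρ (CliffordAlgebra.ι Q x) s)))
    (J : Fin k → Fin n) (hJ : StrictMono J)
    (v : S) (w' : Module.Dual ℂ S) :
    ∑ i : Fin n,
        (ρ' (CliffordAlgebra.ι Q (EuclideanSpace.single i (1 : ℝ))) w')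
          ((ρ ((List.ofFn fun a =>
              CliffordAlgebra.ι Q (EuclideanSpace.single (J a) (1 : ℝ))).prod))
            ((ρ (CliffordAlgebra.ι Q (EuclideanSpace.single i (1 : ℝ)))) v)) =
      ((-1 : ℂ) ^ k * ((n : ℂ) - 2 * k)) *
        w' ((ρ ((List.ofFn fun a =>
            CliffordAlgebra.ι Q (EuclideanSpace.single (J a) (1 : ℝ))).prod)) v) :=
  psi_k_L_general n k Q hQ S ρ ρ' hρ' J hJ v w'
end

section
/- Let (S,ρ) be a Clifford module for Cl(ℝⁿ), let s ∈ ℂ, and define r̸_s : ℝⁿ∖{0} → End_ℂ(S) by r̸_s(x) = ‖x‖^{s−1}·ρ(x), where ‖x‖^{s−1} = exp((s−1)·log‖x‖) ∈ ℂ. Then for every x ≠ 0, the Laplacian acting componentwise satisfies Δ r̸_s(x) = ∑_{j=1}^n ∂²r̸_s/∂x_j²(x) = (s−1)(s+n−1)·r̸_{s−2}(x) = (s−1)(s+n−1)·‖x‖^{s−3}·ρ(x). -/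
/-!
By linearity of `ρ`, along a coordinate line `t ↦ p + t e` the function is
`φ(t) • (ρ p + t ρ e)` with `φ(t) = ‖p + t e‖^c`, `c = s - 1`, so its second derivative at `0` is
`φ''(0) ρ p + 2 φ'(0) ρ e`, where `φ'(t) = c ‖p + t e‖^(c-2) ⟪p + t e, e⟫`. Summing over an
orthonormal basis, `∑ ⟪p, eᵢ⟫² = ‖p‖²` and `∑ ⟪p, eᵢ⟫ ρ eᵢ = ρ p` turn the sum into
`c (c + n) ‖p‖^(c-2) ρ p`.
-/

open Filter Topology
open scoped RealInnerProductSpace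

variable {F E : Type*} [NormedAddCommGroup F] [InnerProductSpace ℝ F]
  [NormedAddCommGroup E] [NormedSpace ℂ E]

theorem HasDerivAt.norm {u : ℝ → F} {u' : F} {t : ℝ} (hu : HasDerivAt u u' t) (h0 : u t ≠ 0) :
    HasDerivAt (fun t => ‖u t‖) (⟪u t, u'⟫ / ‖u t‖) t := by
  have h := hu.norm_sq.sqrt (by positivity)
  simp only [Real.sqrt_sq (norm_nonneg _)] at h
  convert h using 1
  ring

theorem HasDerivAt.ofReal_norm_cpow {u : ℝ → F} {u' : F} {t : ℝ} (c : ℂ) (hu : HasDerivAt u u' t)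
    (h0 : u t ≠ 0) :
    HasDerivAt (fun t => (‖u t‖ : ℂ) ^ c) (c * (‖u t‖ : ℂ) ^ (c - 2) * ⟪u t, u'⟫) t := by
  have hpos : 0 < ‖u t‖ := norm_pos_iff.2 h0
  have hne : (‖u t‖ : ℂ) ≠ 0 := by exact_mod_cast hpos.ne'
  refine ((Complex.hasStrictDerivAt_cpow_const (c := c)
    (Complex.ofReal_mem_slitPlane.2 hpos)).hasDerivAt.comp t (hu.norm h0).ofReal_comp).congr_deriv ?_
  rw [show c - 1 = c - 2 + 1 by ring, Complex.cpow_add _ _ hne, Complex.cpow_one]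
  push_cast
  field_simp

theorem iteratedDeriv_two_smul_affine {φ φ' : ℝ → ℂ} {φ'' : ℂ} {t₀ : ℝ} (hφ : ∀ᶠ t in 𝓝 t₀, HasDerivAt φ (φ' t) t)
    (hφ' : HasDerivAt φ' φ'' t₀) (v w : E) :
    iteratedDeriv 2 (fun t : ℝ => φ t • (v + t • w)) t₀ =
      φ'' • (v + t₀ • w) + (2 * φ' t₀) • w := by
  have hline : ∀ t : ℝ, HasDerivAt (fun t : ℝ => v + t • w) w t := fun t => by
    simpa using ((hasDerivAt_id t).smul_const w).const_add v
  have hderiv : deriv (fun t : ℝ => φ t • (v + t • w)) =ᶠ[𝓝 t₀]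
      fun t => φ' t • (v + t • w) + φ t • w := by
    filter_upwards [hφ] with t ht
    exact ((ht.smul (hline t)).deriv).trans (add_comm _ _)
  have hderiv2 : HasDerivAt (fun t => φ' t • (v + t • w) + φ t • w)
      (φ' t₀ • w + φ'' • (v + t₀ • w) + φ' t₀ • w) t₀ :=
    (hφ'.smul (hline t₀)).add (hφ.self_of_nhds.smul_const w)
  rw [iteratedDeriv_succ, iteratedDeriv_one, hderiv.deriv_eq, hderiv2.deriv]
  module

theorem iteratedDeriv_two_norm_cpow_smul_line (c : ℂ) {p : F} (hp : p ≠ 0) (e : F)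
    (A : F →ₗ[ℝ] E) :
    iteratedDeriv 2 (fun t : ℝ => (‖p + t • e‖ : ℂ) ^ c • A (p + t • e)) 0 =
      (c * ((c - 2) * (‖p‖ : ℂ) ^ (c - 4) * ⟪p, e⟫ ^ 2 + (‖p‖ : ℂ) ^ (c - 2) * ‖e‖ ^ 2)) • A p
        + (2 * (c * (‖p‖ : ℂ) ^ (c - 2) * ⟪p, e⟫)) • A e := by
  have hline : ∀ t : ℝ, HasDerivAt (fun t : ℝ => p + t • e) e t := fun t => by
    simpa using ((hasDerivAt_id t).smul_const e).const_add p
  have hnear : ∀ᶠ t in 𝓝 (0 : ℝ), p + t • e ≠ 0 :=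
    (hline 0).continuousAt.eventually_ne (by simpa using hp)
  have hφ : ∀ᶠ t in 𝓝 (0 : ℝ), HasDerivAt (fun t : ℝ => (‖p + t • e‖ : ℂ) ^ c)
      (c * (‖p + t • e‖ : ℂ) ^ (c - 2) * ⟪p + t • e, e⟫) t := by
    filter_upwards [hnear] with t ht
    exact (hline t).ofReal_norm_cpow c ht
  have hinner : HasDerivAt (fun t : ℝ => (⟪p + t • e, e⟫ : ℂ)) (‖e‖ ^ 2 : ℝ) 0 := by
    simpa [real_inner_self_eq_norm_sq] using ((hline 0).inner ℝ (hasDerivAt_const 0 e)).ofReal_comp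
  have hφ' := (((hline 0).ofReal_norm_cpow (c - 2) (by simpa using hp)).const_mul c).mul hinner
  simp only [map_add, map_smul]
  rw [iteratedDeriv_two_smul_affine hφ hφ']
  simp only [zero_smul, add_zero]
  push_cast
  rw [show c - 2 - 2 = c - 4 by ring]
  module

theorem sum_iteratedDeriv_two_norm_cpow_smul {ι : Type*} [Fintype ι] (b : OrthonormalBasis ι ℝ F)
    (c : ℂ) {p : F} (hp : p ≠ 0) (A : F →ₗ[ℝ] E) :
    ∑ i, iteratedDeriv 2 (fun t : ℝ => (‖p + t • b i‖ : ℂ) ^ c • A (p + t • b i)) 0 =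
      (c * (c + Fintype.card ι)) • ((‖p‖ : ℂ) ^ (c - 2) • A p) := by
  have hr : (‖p‖ : ℂ) ≠ 0 := by exact_mod_cast norm_ne_zero_iff.2 hp
  have hpow : (‖p‖ : ℂ) ^ (c - 4) * (‖p‖ : ℂ) ^ 2 = (‖p‖ : ℂ) ^ (c - 2) := by
    rw [← Complex.cpow_two, ← Complex.cpow_add _ _ hr]
    ring_nf
  have hsq : ∑ i, (⟪p, b i⟫ : ℂ) ^ 2 = (‖p‖ : ℂ) ^ 2 := by
    exact_mod_cast b.sum_sq_inner_left p
  have hexpand : ∑ i, (⟪p, b i⟫ : ℂ) • A (b i) = A p := by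
    simp_rw [Complex.coe_smul, ← map_smul, ← map_sum, ← real_inner_comm p, b.sum_repr']
  have hscalar : ∑ i, c * ((c - 2) * (‖p‖ : ℂ) ^ (c - 4) * ⟪p, b i⟫ ^ 2
      + (‖p‖ : ℂ) ^ (c - 2) * ‖b i‖ ^ 2) = c * (c - 2 + Fintype.card ι) * (‖p‖ : ℂ) ^ (c - 2) := by
    simp only [b.orthonormal.1, ← Finset.mul_sum, Finset.sum_add_distrib, hsq,
      mul_assoc, hpow, Finset.sum_const, Finset.card_univ, nsmul_eq_mul]
    push_cast
    ring
  have hvector : ∑ i, (2 * (c * (‖p‖ : ℂ) ^ (c - 2) * ⟪p, b i⟫)) • A (b i)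
      = (2 * c * (‖p‖ : ℂ) ^ (c - 2)) • A p := by
    rw [← hexpand, Finset.smul_sum]
    refine Finset.sum_congr rfl fun i _ => ?_
    rw [smul_smul]
    ring_nf
  rw [Finset.sum_congr rfl fun i _ => iteratedDeriv_two_norm_cpow_smul_line c hp (b i) A,
    Finset.sum_add_distrib, ← Finset.sum_smul, hscalar, hvector, smul_smul, ← add_smul]
  congr 1
  ring

theorem clifford_riesz_laplacian_general (n : ℕ)
    (Q : QuadraticForm ℝ (EuclideanSpace ℝ (Fin n)))
    (S : Type) [NormedAddCommGroup S] [NormedSpace ℂ S] [FiniteDimensional ℂ S]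
    (ρ : CliffordAlgebra Q →ₐ[ℝ] Module.End ℂ S)
    (s : ℂ)
    (x : EuclideanSpace ℝ (Fin n)) (hx : x ≠ 0) :
    ∑ j : Fin n,
        iteratedDeriv 2
          (fun t : ℝ =>
            ((‖x + t • EuclideanSpace.single j (1 : ℝ)‖ : ℂ) ^ (s - 1)) •
              LinearMap.toContinuousLinearMap
                (ρ (CliffordAlgebra.ι Q (x + t • EuclideanSpace.single j (1 : ℝ))))) 0 =
      ((s - 1) * (s + (n : ℂ) - 1)) •
        (((‖x‖ : ℂ) ^ (s - 3)) •
          LinearMap.toContinuousLinearMap (ρ (CliffordAlgebra.ι Q x))) := by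
  let A : EuclideanSpace ℝ (Fin n) →ₗ[ℝ] (S →L[ℂ] S) :=
    (LinearMap.toContinuousLinearMap.toLinearMap.restrictScalars ℝ) ∘ₗ ρ.toLinearMap ∘ₗ
      CliffordAlgebra.ι Q
  have h := sum_iteratedDeriv_two_norm_cpow_smul (EuclideanSpace.basisFun (Fin n) ℝ) (s - 1) hx A
  simp only [EuclideanSpace.basisFun_apply, Fintype.card_fin] at h
  rwa [show s - 1 - 2 = s - 3 by ring, show s - 1 + n = s + n - 1 by ring] at h

/-- Laplacian of the Clifford–Riesz function:
Δ r̸_s(x) = (s−1)(s+n−1)·r̸_{s−2}(x) = (s−1)(s+n−1)·‖x‖^{s−3}·ρ(x). -/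
theorem clifford_riesz_laplacian (n : ℕ)
    (Q : QuadraticForm ℝ (EuclideanSpace ℝ (Fin n)))
    (hQ : ∀ x : EuclideanSpace ℝ (Fin n), Q x = -‖x‖ ^ 2)
    (S : Type) [NormedAddCommGroup S] [NormedSpace ℂ S] [FiniteDimensional ℂ S] [Nontrivial S]
    (ρ : CliffordAlgebra Q →ₐ[ℝ] Module.End ℂ S)
    (s : ℂ)
    (x : EuclideanSpace ℝ (Fin n)) (hx : x ≠ 0) :
    ∑ j : Fin n,
        iteratedDeriv 2
          (fun t : ℝ =>
            ((‖x + t • EuclideanSpace.single j (1 : ℝ)‖ : ℂ) ^ (s - 1)) •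
              LinearMap.toContinuousLinearMap
                (ρ (CliffordAlgebra.ι Q (x + t • EuclideanSpace.single j (1 : ℝ))))) 0 =
      ((s - 1) * (s + (n : ℂ) - 1)) •
        (((‖x‖ : ℂ) ^ (s - 3)) •
          LinearMap.toContinuousLinearMap (ρ (CliffordAlgebra.ι Q x))) :=
  clifford_riesz_laplacian_general n Q S ρ s x hx
end
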